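/- arXiv:1012.3878 — 2 statements merged into one kernel-verified Lean document; each statement's English description precedes it below -/
import Mathlib

section
/- The local part of a bipartite binary-input binary-output non-signalling system with (1/4)·∑_{x⊕y=u·v} P(x,y|u,v) = 1−ε and ε ≤ 1/4 equals 4ε. -/
open scoped Classical

/-- Bipartite non-signalling condition (binary alphabets). -/
def IsNS2 (P : Bool → Bool → Bool → Bool → ℝ) : Prop :=
  (∀ y u u' v, ∑ x, P x y u v = ∑ x, P x y u' v) ∧
  (∀ x u v v', ∑ y, P x y u v = ∑ y, P x y u v')

/-- Conditional probability distribution (binary alphabets). -/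
def IsDist2 (P : Bool → Bool → Bool → Bool → ℝ) : Prop :=
  (∀ x y u v, 0 ≤ P x y u v) ∧ ∀ u v, ∑ x, ∑ y, P x y u v = 1

/-- Local system: convex combination of local deterministic systems `X = f(U)`, `Y = g(V)`. -/
def IsLocal2 (P : Bool → Bool → Bool → Bool → ℝ) : Prop :=
  ∃ ρ : (Bool → Bool) × (Bool → Bool) → ℝ,
    (∀ r, 0 ≤ ρ r) ∧ (∑ r, ρ r = 1) ∧
    ∀ x y u v, P x y u v = ∑ r, ρ r * (if x = r.1 u ∧ y = r.2 v then (1:ℝ) else 0)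


/-!
A local deterministic strategy loses the CHSH game on at least one of the four input pairs, so
the losing mass `4ε` of `P = p L + (1 - p) N` is at least `p`. Conversely, every losing entry
`(x, y, u, v)` of `P` lies on exactly one deterministic strategy that wins on the other three
input pairs; weighting these eight strategies by the losing entries gives a local box of total
mass `4ε`, and no-signalling forces the remainder to be `1 - 4ε` times the PR box.
-/

open Finset

abbrev Strategy := (Bool → Bool) × (Bool → Bool)

def detBox (r : Strategy) (x y u v : Bool) : ℝ :=
  if x = r.1 u ∧ y = r.2 v then 1 else 0

lemma isLocal2_iff {L : Bool → Bool → Bool → Bool → ℝ} :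
    IsLocal2 L ↔ ∃ ρ : Strategy → ℝ, (∀ r, 0 ≤ ρ r) ∧ ∑ r, ρ r = 1 ∧
      ∀ x y u v, L x y u v = ∑ r, ρ r * detBox r x y u v :=
  Iff.rfl

lemma isLocal2_sum_mul_detBox {ι : Type*} [Fintype ι] (w : ι → ℝ) (s : ι → Strategy)
    (hw0 : ∀ i, 0 ≤ w i) (hw1 : ∑ i, w i = 1) :
    IsLocal2 (fun x y u v => ∑ i, w i * detBox (s i) x y u v) := by
  refine ⟨fun r => ∑ i, if s i = r then w i else 0, fun r => sum_nonneg fun i _ => ?_, ?_,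
    fun x y u v => ?_⟩
  · split_ifs <;> simp [hw0]
  · rw [sum_comm]; simpa using hw1
  · simp only [sum_mul, ite_mul, zero_mul]
    rw [sum_comm]
    simp only [sum_ite_eq, mem_univ, if_true]
    rfl

lemma isLocal2_detBox (r : Strategy) : IsLocal2 (detBox r) := by
  simpa using isLocal2_sum_mul_detBox (fun _ : Unit => 1) (fun _ => r) (fun _ => zero_le_one)
    (by simp)

lemma exists_isLocal2_sum_mul_detBox_eq {ι : Type*} [Fintype ι] (w : ι → ℝ)
    (s : ι → Strategy) (hw0 : ∀ i, 0 ≤ w i) :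
    ∃ L, IsLocal2 L ∧
      ∀ x y u v, ∑ i, w i * detBox (s i) x y u v = (∑ i, w i) * L x y u v := by
  by_cases hw : ∑ i, w i = 0
  · have hw' : ∀ i, w i = 0 := fun i =>
      (sum_eq_zero_iff_of_nonneg fun i _ => hw0 i).1 hw i (mem_univ i)
    exact ⟨detBox (id, id), isLocal2_detBox _, fun x y u v => by simp [hw']⟩
  refine ⟨fun x y u v => ∑ i, (w i / ∑ j, w j) * detBox (s i) x y u v,
    isLocal2_sum_mul_detBox _ s (fun i => div_nonneg (hw0 i) (sum_nonneg fun j _ => hw0 j)) ?_,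
    fun x y u v => ?_⟩
  · rw [← sum_div, div_self hw]
  · rw [mul_sum]
    refine sum_congr rfl fun i _ => ?_
    field_simp

def chshWin (P : Bool → Bool → Bool → Bool → ℝ) : ℝ :=
  ∑ u : Bool, ∑ v : Bool, ∑ x : Bool, ∑ y : Bool,
    if xor x y = (u && v) then P x y u v else 0

def chshLoss (P : Bool → Bool → Bool → Bool → ℝ) : ℝ :=
  ∑ u : Bool, ∑ v : Bool, ∑ x : Bool, ∑ y : Bool,
    if xor x y = (u && v) then 0 else P x y u v

lemma chshWin_add_chshLoss {P : Bool → Bool → Bool → Bool → ℝ} (hP : IsDist2 P) :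
    chshWin P + chshLoss P = 4 := by
  simp only [chshWin, chshLoss, ← sum_add_distrib, ite_add_ite, add_zero, zero_add, ite_self,
    hP.2]
  norm_num

lemma chshLoss_nonneg {P : Bool → Bool → Bool → Bool → ℝ}
    (hP : ∀ x y u v, 0 ≤ P x y u v) :
    0 ≤ chshLoss P :=
  sum_nonneg fun u _ => sum_nonneg fun v _ => sum_nonneg fun x _ => sum_nonneg fun y _ => by
    split_ifs <;> simp [hP]

lemma chshLoss_add (P Q : Bool → Bool → Bool → Bool → ℝ) :
    chshLoss (P + Q) = chshLoss P + chshLoss Q := by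
  simp only [chshLoss, ← sum_add_distrib, Pi.add_apply]
  congr! 4 with u _ v _ x _ y _
  split_ifs <;> simp

lemma chshLoss_smul (a : ℝ) (P : Bool → Bool → Bool → Bool → ℝ) :
    chshLoss (a • P) = a * chshLoss P := by
  simp only [chshLoss, mul_sum, Pi.smul_apply, smul_eq_mul, mul_ite, mul_zero]

lemma chshLoss_sum {ι : Type*} (s : Finset ι)
    (P : ι → Bool → Bool → Bool → Bool → ℝ) :
    chshLoss (∑ i ∈ s, P i) = ∑ i ∈ s, chshLoss (P i) :=
  map_sum (AddMonoidHom.mk' chshLoss chshLoss_add) P s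

lemma one_le_chshLoss_detBox (r : Strategy) : 1 ≤ chshLoss (detBox r) := by
  obtain ⟨f, g⟩ := r
  simp only [chshLoss, detBox, Fintype.sum_bool]
  rcases Bool.eq_false_or_eq_true (f true) with h₁ | h₁ <;>
  rcases Bool.eq_false_or_eq_true (f false) with h₂ | h₂ <;>
  rcases Bool.eq_false_or_eq_true (g true) with h₃ | h₃ <;>
  rcases Bool.eq_false_or_eq_true (g false) with h₄ | h₄ <;>
  norm_num [h₁, h₂, h₃, h₄]

lemma IsLocal2.one_le_chshLoss {L : Bool → Bool → Bool → Bool → ℝ} (hL : IsLocal2 L) :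
    1 ≤ chshLoss L := by
  obtain ⟨ρ, hρ0, hρ1, hL⟩ := isLocal2_iff.1 hL
  have hLsum : L = ∑ r, ρ r • detBox r := by
    ext x y u v; simp [hL, Finset.sum_apply]
  calc 1 = ∑ r, ρ r * 1 := by simp [hρ1]
    _ ≤ ∑ r, ρ r * chshLoss (detBox r) :=
      sum_le_sum fun r _ => mul_le_mul_of_nonneg_left (one_le_chshLoss_detBox r) (hρ0 r)
    _ = chshLoss L := by simp [hLsum, chshLoss_sum, chshLoss_smul]

lemma le_chshLoss_of_eq_add {P L N : Bool → Bool → Bool → Bool → ℝ} {q : ℝ}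
    (hq0 : 0 ≤ q) (hq1 : q ≤ 1) (hL : IsLocal2 L) (hN : ∀ x y u v, 0 ≤ N x y u v)
    (hP : ∀ x y u v, P x y u v = q * L x y u v + (1 - q) * N x y u v) : q ≤ chshLoss P := by
  have hPeq : P = q • L + (1 - q) • N := by ext x y u v; simp [hP]
  rw [hPeq, chshLoss_add, chshLoss_smul, chshLoss_smul]
  nlinarith [hL.one_le_chshLoss, chshLoss_nonneg hN]

noncomputable def prBox (x y u v : Bool) : ℝ :=
  if xor x y = (u && v) then 1 / 2 else 0

lemma isDist2_prBox : IsDist2 prBox := by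
  refine ⟨fun x y u v => by unfold prBox; positivity, fun u v => ?_⟩
  cases u <;> cases v <;> norm_num [prBox]

lemma isNS2_prBox : IsNS2 prBox := by
  constructor <;> intro a b c d <;> cases a <;> cases b <;> cases c <;> cases d <;> simp [prBox]

/-- For `xor x y ≠ (u && v)`, the strategy answering `(x, y)` on `(u, v)` and winning on the
other three input pairs. -/
def strategyThrough (x y u v : Bool) : Strategy :=
  (fun u' => if u' = u then x else xor y (u' && v), fun v' => if v' = v then y else xor x (u && v'))

def lossMixture (P : Bool → Bool → Bool → Bool → ℝ) (x y u v : Bool) : ℝ :=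
  ∑ u' : Bool, ∑ v' : Bool, ∑ x' : Bool, ∑ y' : Bool,
    if xor x' y' = (u' && v') then 0
    else P x' y' u' v' * detBox (strategyThrough x' y' u' v') x y u v

lemma exists_isLocal2_lossMixture_eq {P : Bool → Bool → Bool → Bool → ℝ}
    (hP : ∀ x y u v, 0 ≤ P x y u v) :
    ∃ L, IsLocal2 L ∧ ∀ x y u v, lossMixture P x y u v = chshLoss P * L x y u v := by
  obtain ⟨L, hL, hsum⟩ := exists_isLocal2_sum_mul_detBox_eq
    (fun e : Bool × Bool × Bool × Bool =>
      if xor e.2.2.1 e.2.2.2 = (e.1 && e.2.1) then 0 else P e.2.2.1 e.2.2.2 e.1 e.2.1)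
    (fun e => strategyThrough e.2.2.1 e.2.2.2 e.1 e.2.1) (fun e => by split_ifs <;> simp [hP])
  refine ⟨L, hL, fun x y u v => ?_⟩
  simpa only [lossMixture, chshLoss, Fintype.sum_prod_type, ite_mul, zero_mul] using hsum x y u v

/-- On a losing entry both sides equal `P`; on a winning entry, no-signalling gives
`2 * (P - lossMixture P) = 1 - chshLoss P`. -/
lemma eq_lossMixture_add_prBox {P : Bool → Bool → Bool → Bool → ℝ} (hP : IsDist2 P)
    (hPns : IsNS2 P) (x y u v : Bool) :
    P x y u v = lossMixture P x y u v + (1 - chshLoss P) * prBox x y u v := by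
  obtain ⟨-, hP1⟩ := hP
  obtain ⟨hA, hB⟩ := hPns
  simp only [Fintype.sum_bool] at hA hB hP1
  cases x <;> cases y <;> cases u <;> cases v <;>
    norm_num [lossMixture, detBox, strategyThrough, chshLoss, prBox, Fintype.sum_bool] <;>
    linarith [hA false false true false, hA false false true true, hA true false true false,
      hA true false true true, hB false false false true, hB false true false true,
      hB true false false true, hB true true false true, hP1 false false, hP1 false true,
      hP1 true false, hP1 true true]

/-- The local part of a bipartite binary non-signalling system with CHSH value `1−ε`
(`ε ≤ 1/4`) equals `4ε`. -/
theorem stmt_5 (ε : ℝ) (hε : ε ≤ 1/4)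
    (P : Bool → Bool → Bool → Bool → ℝ) (hd : IsDist2 P) (hns : IsNS2 P)
    (hchsh : (1/4) * ∑ u : Bool, ∑ v : Bool, ∑ x : Bool, ∑ y : Bool,
        (if xor x y = (u && v) then P x y u v else 0) = 1 - ε) :
    IsGreatest {p : ℝ | 0 ≤ p ∧ p ≤ 1 ∧
      ∃ L N : Bool → Bool → Bool → Bool → ℝ,
        IsLocal2 L ∧ IsDist2 N ∧ IsNS2 N ∧
        ∀ x y u v, P x y u v = p * L x y u v + (1 - p) * N x y u v}
      (4 * ε) := by
  have hloss : chshLoss P = 4 * ε := by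
    have := chshWin_add_chshLoss hd
    rw [chshWin] at this
    linarith
  refine ⟨⟨hloss ▸ chshLoss_nonneg hd.1, by linarith, ?_⟩, ?_⟩
  · obtain ⟨L, hL, hLeq⟩ := exists_isLocal2_lossMixture_eq hd.1
    refine ⟨L, prBox, hL, isDist2_prBox, isNS2_prBox, fun x y u v => ?_⟩
    rw [eq_lossMixture_add_prBox hd hns, hLeq, hloss]
  · rintro q ⟨hq0, hq1, L, N, hL, hN, -, hdec⟩
    exact hloss ▸ le_chshLoss_of_eq_add hq0 hq1 hL hN.1 hdec
end

section
/- For the system P^{n,ε} consisting of n independent unbiased PR-boxes with error ε ≤ 1/4, and the XOR function f(x) = ⊕_{i} x_i, the adversarial strategy w̄ achieves distance from uniform d(f(X)|Z(w̄)) = ∑_{i=0}^{⌊(n−1)/2⌋} C(n, n−2i−1)·(1−ε)^{n−2i−1}·ε^{2i+1}, which is at least ε for all n ≥ 1 and tends to 1/2 as n → ∞. -/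
/-!
Write `s(x) = (-1)^|x|` for the parity sign of `x`. For fixed `y` the two masses in the minimum
are `(T ± U)/2` with `T = ∑ₓ P(x,y) = 2⁻ⁿ` and `U = ∑ₓ s(x) P(x,y)`. Since `P(·,y)` is a product
over the boxes, `U` factorizes to `s(y) ((1 - 2ε)/2)ⁿ`, so the minimum is `2⁻ⁿ (1 - (1-2ε)ⁿ)/2`
for every `y`, and summing over `y` gives `(1 - (1-2ε)ⁿ)/2`. This is also the odd part of the
binomial expansion of `(ε + (1 - ε))ⁿ`, i.e. `xorDistBound ε n`. As `0 ≤ 1 - 2ε < 1`, the lower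
bound `ε` and the limit `1/2` follow.
-/

open scoped Classical

/-- `∑_{i=0}^{⌊(n−1)/2⌋} C(n, n−2i−1)·(1−ε)^(n−2i−1)·ε^(2i+1)`. -/
noncomputable def xorDistBound (ε : ℝ) (n : ℕ) : ℝ :=
  ∑ i ∈ Finset.range ((n - 1) / 2 + 1),
    (n.choose (n - 2*i - 1) : ℝ) * (1 - ε) ^ (n - 2*i - 1) * ε ^ (2*i + 1)

open Finset

lemma prod_ite_eq_pow_hammingDist {ι β M : Type*} [Fintype ι] [DecidableEq β] [CommMonoid M]
    (x y : ι → β) (a b : M) :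
    ∏ i, (if x i = y i then a else b)
      = a ^ (Fintype.card ι - hammingDist x y) * b ^ hammingDist x y := by
  rw [prod_ite, prod_const, prod_const, hammingDist, ← card_univ,
    ← card_filter_add_card_filter_not (s := univ) (fun i => x i = y i), Nat.add_sub_cancel]

lemma sum_prod_bool {ι R : Type*} [Fintype ι] [DecidableEq ι] [CommSemiring R]
    (q : ι → Bool → R) :
    ∑ x : ι → Bool, ∏ i, q i (x i) = ∏ i, (q i true + q i false) := by
  simp only [← Fintype.sum_bool, Fintype.prod_sum]

lemma sum_ite_even_eq {α R : Type*} [Field R] [CharZero R] (s : Finset α) (w : α → ℕ)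
    (f : α → R) :
    ∑ x ∈ s, (if Even (w x) then f x else 0)
      = (∑ x ∈ s, f x + ∑ x ∈ s, (-1) ^ w x * f x) / 2 := by
  rw [← sum_add_distrib, sum_div]
  refine sum_congr rfl fun x _ => ?_
  rcases Nat.even_or_odd (w x) with h | h
  · rw [if_pos h, h.neg_one_pow]; ring
  · rw [if_neg (Nat.not_even_iff_odd.mpr h), h.neg_one_pow]; ring

lemma sum_ite_not_even_eq {α R : Type*} [Field R] [CharZero R] (s : Finset α) (w : α → ℕ)
    (f : α → R) :
    ∑ x ∈ s, (if ¬ Even (w x) then f x else 0)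
      = (∑ x ∈ s, f x - ∑ x ∈ s, (-1) ^ w x * f x) / 2 := by
  rw [← sum_sub_distrib, sum_div]
  refine sum_congr rfl fun x _ => ?_
  rcases Nat.even_or_odd (w x) with h | h
  · rw [if_neg (not_not_intro h), h.neg_one_pow]; ring
  · rw [if_pos (Nat.not_even_iff_odd.mpr h), h.neg_one_pow]; ring

lemma two_mul_sum_odd_add_pow {R : Type*} [CommRing R] (a b : R) (n : ℕ) :
    2 * ∑ k ∈ range (n + 1), (if Odd k then a ^ k * b ^ (n - k) * n.choose k else 0)
      = (a + b) ^ n - (-a + b) ^ n := by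
  rw [add_pow, add_pow, ← sum_sub_distrib, mul_sum]
  refine sum_congr rfl fun k _ => ?_
  rcases Nat.even_or_odd k with h | h
  · rw [if_neg (Nat.not_odd_iff_even.mpr h), h.neg_pow]; ring
  · rw [if_pos h, h.neg_pow]; ring

-- `P^{n,ε}(x,y)` for the all-zero input.
noncomputable def prBoxProb (ε : ℝ) (n : ℕ) (x y : Fin n → Bool) : ℝ :=
  (1/2 : ℝ)^n * (1-ε)^(n - hammingDist x y) * ε^(hammingDist x y)

section PRBox

variable (ε : ℝ) {n : ℕ}

lemma prBoxProb_eq_prod (x y : Fin n → Bool) :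
    prBoxProb ε n x y = ∏ i, (1/2 : ℝ) * (if x i = y i then 1 - ε else ε) := by
  rw [prod_mul_distrib, prod_const, prod_ite_eq_pow_hammingDist, card_univ, Fintype.card_fin,
    prBoxProb, mul_assoc]

lemma sum_prBoxProb (y : Fin n → Bool) : ∑ x, prBoxProb ε n x y = (1/2)^n := by
  simp_rw [prBoxProb_eq_prod]
  refine (sum_prod_bool fun i a => (1/2 : ℝ) * if a = y i then 1 - ε else ε).trans ?_
  rw [← Fin.prod_const]
  refine prod_congr rfl fun i _ => ?_
  cases y i <;> simp only [Bool.true_eq_false, Bool.false_eq_true, ↓reduceIte] <;> ring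

lemma sum_neg_one_pow_mul_prBoxProb (y : Fin n → Bool) :
    ∑ x, (-1 : ℝ) ^ #{i | x i = true} * prBoxProb ε n x y
      = (-1) ^ #{i | y i = true} * ((1 - 2*ε)/2)^n := by
  have sign_eq_prod (z : Fin n → Bool) :
      (-1 : ℝ) ^ #{i | z i = true} = ∏ i, (if z i = true then -1 else 1) := by
    rw [prod_ite, prod_const, prod_const, one_pow, mul_one]
  simp_rw [sign_eq_prod, prBoxProb_eq_prod, ← prod_mul_distrib]
  refine (sum_prod_bool fun i a =>
    (if a = true then -1 else 1) * ((1/2 : ℝ) * if a = y i then 1 - ε else ε)).trans ?_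
  rw [← Fin.prod_const, ← prod_mul_distrib]
  refine prod_congr rfl fun i _ => ?_
  cases y i <;> simp only [Bool.true_eq_false, Bool.false_eq_true, ↓reduceIte] <;> ring

lemma min_sum_even_odd_prBoxProb (hε : ε ≤ 1/2) (y : Fin n → Bool) :
    min (∑ x, if Even #{i | x i = true} then prBoxProb ε n x y else 0)
        (∑ x, if ¬ Even #{i | x i = true} then prBoxProb ε n x y else 0)
      = (1/2)^n * ((1 - (1 - 2*ε)^n) / 2) := by
  have hscale : ((1 - 2*ε)/2)^n = (1/2)^n * (1 - 2*ε)^n := by rw [← mul_pow]; ring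
  have hbias : 0 ≤ ((1 - 2*ε)/2)^n := pow_nonneg (by linarith) n
  rw [sum_ite_even_eq, sum_ite_not_even_eq, sum_prBoxProb, sum_neg_one_pow_mul_prBoxProb]
  rcases Nat.even_or_odd #{i | y i = true} with h | h
  · rw [h.neg_one_pow, min_eq_right (by linarith), hscale]
    ring
  · rw [h.neg_one_pow, min_eq_left (by linarith), hscale]
    ring

lemma sum_min_sum_even_odd_prBoxProb (hε : ε ≤ 1/2) :
    ∑ y, min (∑ x, if Even #{i | x i = true} then prBoxProb ε n x y else 0)
        (∑ x, if ¬ Even #{i | x i = true} then prBoxProb ε n x y else 0)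
      = (1 - (1 - 2*ε)^n) / 2 := by
  simp_rw [min_sum_even_odd_prBoxProb ε hε]
  rw [sum_const, card_univ, Fintype.card_fun, Fintype.card_bool, Fintype.card_fin, nsmul_eq_mul,
    ← mul_assoc, Nat.cast_pow, ← mul_pow]
  norm_num

end PRBox

lemma xorDistBound_eq_sum_odd (ε : ℝ) {n : ℕ} (hn : 1 ≤ n) :
    xorDistBound ε n
      = ∑ k ∈ range (n + 1), (if Odd k then ε ^ k * (1 - ε) ^ (n - k) * n.choose k else 0) := by
  rw [← sum_filter, xorDistBound]
  refine sum_nbij' (fun i => 2*i + 1) (fun k => k / 2) ?_ ?_ ?_ ?_ ?_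
  · intro i hi
    simp only [mem_filter, mem_range, Nat.odd_iff] at hi ⊢
    omega
  · intro k hk
    simp only [mem_filter, mem_range, Nat.odd_iff] at hk ⊢
    omega
  · intro i _
    omega
  · intro k hk
    simp only [mem_filter, mem_range, Nat.odd_iff] at hk
    omega
  · intro i hi
    simp only [mem_range] at hi
    rw [show n - 2*i - 1 = n - (2*i + 1) by omega, Nat.choose_symm (by omega)]
    ring

lemma xorDistBound_eq (ε : ℝ) {n : ℕ} (hn : 1 ≤ n) :
    xorDistBound ε n = (1 - (1 - 2*ε)^n) / 2 := by
  have h := two_mul_sum_odd_add_pow ε (1 - ε) n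
  rw [add_sub_cancel, one_pow, show -ε + (1 - ε) = 1 - 2*ε by ring] at h
  rw [xorDistBound_eq_sum_odd ε hn, ← h]
  ring

/-- For `n` independent unbiased PR-boxes with error `0 < ε ≤ 1/4` and the XOR
function, the adversarial strategy `w̄` achieves distance from uniform
`∑_y min{∑_{x : ⊕x_i = 0} P(x,y), ∑_{x : ⊕x_i = 1} P(x,y)}` equal to
`∑_i C(n, n−2i−1)(1−ε)^(n−2i−1)ε^(2i+1)`, which is at least `ε` for all `n ≥ 1`
and tends to `1/2` as `n → ∞`. -/
theorem stmt_16 (ε : ℝ) (hε0 : 0 < ε) (hε : ε ≤ 1/4) :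
    (∀ n : ℕ, 1 ≤ n →
      ∑ y : Fin n → Bool,
        min (∑ x : Fin n → Bool,
              if Even (Finset.univ.filter fun i => x i = true).card then
                (1/2 : ℝ)^n * (1-ε)^(n - hammingDist x y) * ε^(hammingDist x y) else 0)
            (∑ x : Fin n → Bool,
              if ¬ Even (Finset.univ.filter fun i => x i = true).card then
                (1/2 : ℝ)^n * (1-ε)^(n - hammingDist x y) * ε^(hammingDist x y) else 0)
        = xorDistBound ε n) ∧
    (∀ n : ℕ, 1 ≤ n → ε ≤ xorDistBound ε n) ∧
    Filter.Tendsto (fun n => xorDistBound ε n) Filter.atTop (nhds (1/2)) := by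
  have hε2 : ε ≤ 1/2 := by linarith
  refine ⟨fun n hn => ?_, fun n hn => ?_, ?_⟩
  · rw [xorDistBound_eq ε hn]
    exact sum_min_sum_even_odd_prBoxProb ε hε2
  · have hbias : (1 - 2*ε)^n ≤ 1 - 2*ε := pow_le_of_le_one (by linarith) (by linarith) (by omega)
    rw [xorDistBound_eq ε hn]
    linarith
  · have hbias : Filter.Tendsto (fun n => (1 - 2*ε)^n) Filter.atTop (nhds 0) :=
      tendsto_pow_atTop_nhds_zero_of_lt_one (by linarith) (by linarith)
    refine Filter.Tendsto.congr' ?_ (by simpa using (hbias.const_sub 1).div_const 2)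
    filter_upwards [Filter.eventually_ge_atTop 1] with n hn
    exact (xorDistBound_eq ε hn).symm
end
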